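/- The reverse insertion respects Hecke equivalence: if Ψ(P, (r,c), α) = (P', m), then row(P) is Hecke-equivalent to row(P')·m. -/

import Mathlib

/-- Elementary 0-Hecke relations on words. -/
inductive HeckeRel : List ℕ → List ℕ → Prop
  | idem (i : ℕ) : HeckeRel [i, i] [i]
  | braid (i : ℕ) : HeckeRel [i, i+1, i] [i+1, i, i+1]
  | comm (i j : ℕ) (h : i + 2 ≤ j ∨ j + 2 ≤ i) : HeckeRel [i, j] [j, i]

/-- Hecke equivalence: the congruence on words generated by the 0-Hecke relations. -/
inductive HeckeEquiv : List ℕ → List ℕ → Prop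
  | of {a b : List ℕ} : HeckeRel a b → HeckeEquiv a b
  | refl (a : List ℕ) : HeckeEquiv a a
  | symm {a b : List ℕ} : HeckeEquiv a b → HeckeEquiv b a
  | trans {a b c : List ℕ} : HeckeEquiv a b → HeckeEquiv b c → HeckeEquiv a c
  | append_congr {a b c d : List ℕ} :
      HeckeEquiv a b → HeckeEquiv c d → HeckeEquiv (a ++ c) (b ++ d)

/-- The permutation of `ℕ` associated to a word (letter `i` ↦ the simple
transposition swapping `i` and `i+1`). -/
def wordPerm (a : List ℕ) : Equiv.Perm ℕ := (a.map fun i => Equiv.swap i (i + 1)).prod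

/-- A word on the alphabet of positive integers. -/
def IsPosWord (a : List ℕ) : Prop := ∀ x ∈ a, 0 < x

/-- `a` is a reduced word of the permutation `w`: it represents `w` and has
minimum length among words representing `w`. -/
def IsReducedWordOf (w : Equiv.Perm ℕ) (a : List ℕ) : Prop :=
  IsPosWord a ∧ wordPerm a = w ∧
    ∀ b : List ℕ, IsPosWord b → wordPerm b = w → a.length ≤ b.length

/-- `a` is a Hecke word for `w`: it is Hecke-equivalent to a reduced word of `w`. -/
def IsHeckeWord (w : Equiv.Perm ℕ) (a : List ℕ) : Prop :=
  IsPosWord a ∧ ∃ b, IsReducedWordOf w b ∧ HeckeEquiv a b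

/-- A word is reduced if it has minimum length in its Hecke-equivalence class. -/
def IsReducedWord (a : List ℕ) : Prop := ∀ b, HeckeEquiv a b → a.length ≤ b.length

/-- The `i`-th row (1-indexed) of a tableau presented as a list of rows. -/
def RowOf (T : List (List ℕ)) (i : ℕ) : List ℕ := T.getD (i - 1) []

/-- A decreasing tableau: nonempty rows of positive integers of weakly decreasing
lengths, strictly decreasing along rows and down columns. -/
def IsDecreasingTableau (T : List (List ℕ)) : Prop :=
  (∀ R ∈ T, R ≠ []) ∧
  (∀ R ∈ T, ∀ x ∈ R, 0 < x) ∧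
  (∀ R ∈ T, R.Chain' (fun x y => y < x)) ∧
  T.Chain' (fun R S => S.length ≤ R.length ∧ ∀ j < S.length, S.getD j 0 < R.getD j 0)

/-- The shape of a tableau: the list of its row lengths. -/
def shape (T : List (List ℕ)) : List ℕ := T.map List.length

/-- `(r,c)` (1-indexed, matrix style) is a removable cell of `T`: the cell at the
end of row `r` and at the bottom of column `c`. -/
def IsRemovable (T : List (List ℕ)) (r c : ℕ) : Prop :=
  1 ≤ r ∧ r ≤ T.length ∧ 1 ≤ c ∧ (RowOf T r).length = c ∧ (RowOf T (r + 1)).length < c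

/-- Ejectability (recursive): `x` is ejectable in `T` if `x` is in the first row of
`T` and either `x-1` is not in the first row, or it is and `x-1` is ejectable in
the tableau with the first row removed. -/
def Ejectable : List (List ℕ) → ℕ → Prop
  | [], _ => False
  | R :: rest, x => x ∈ R ∧ (x - 1 ∉ R ∨ Ejectable rest (x - 1))

/-- Boolean version of ejectability, used inside the algorithms. -/
def ejectableB : List (List ℕ) → ℕ → Bool
  | [], _ => false
  | R :: rest, x => R.contains x && (!(R.contains (x - 1)) || ejectableB rest (x - 1))

/-- Smallest ejectable value `x` in `T` with `lo < x < hi`, if any. -/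
def smallestEjectableBetween (T : List (List ℕ)) (lo hi : ℕ) : Option ℕ :=
  ((T.headD []).filter fun x => ejectableB T x && decide (lo < x) && decide (x < hi)).min?

/-- Largest ejectable value `x` in `T` with `lo < x < hi`, if any. -/
def largestEjectableBetween (T : List (List ℕ)) (lo hi : ℕ) : Option ℕ :=
  ((T.headD []).filter fun x => ejectableB T x && decide (lo < x) && decide (x < hi)).max?

/-- Replace all occurrences of `old` by `new` in a row. -/
def replaceVal (R : List ℕ) (old new : ℕ) : List ℕ :=
  R.map fun y => if y = old then new else y

/-- One step of the reverse insertion Ψ at a row `R`, given the already-processed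
lower tableau `B = P'_{>i}`, the value `m1 = m_{i+1}` and flag `a1 = α_{i+1}`.
Returns the new row, the value `m_i` and the flag `α_i`. -/
def psiRowStep (R : List ℕ) (B : List (List ℕ)) (m1 : ℕ) (a1 : Bool) :
    List ℕ × ℕ × Bool :=
  let mi := ((R.filter fun y => decide (m1 < y)).min?).getD 0
  if R.contains (mi - 1) then (R, mi, a1)                        -- Dummy
  else if a1 && !(R.contains m1) then (replaceVal R mi m1, mi, true)  -- Direct Repl.
  else
    match smallestEjectableBetween B m1 mi with
    | some x => (replaceVal R mi x, mi, true)                    -- Indirect Repl.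
    | none => (R, mi, false)                                     -- No Replacement

/-- Process a list of rows (top part of the tableau) from bottom to top, on top of
the already-processed lower tableau `B`, with initial ejected value `m` and flag `a`.
Returns the full processed tableau together with the last ejected value and flag. -/
def psiRows : List (List ℕ) → List (List ℕ) → ℕ → Bool → List (List ℕ) × ℕ × Bool
  | [], B, m, a => (B, m, a)
  | R :: rest, B, m, a =>
    let s := psiRows rest B m a
    let t := psiRowStep R s.1 s.2.1 s.2.2
    (t.1 :: s.1, t.2.1, t.2.2)

/-- The part of the tableau below the processed rows, after the initialization step
of Ψ (for `α = 1` the removable cell at the end of row `r` is deleted). -/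
def psiBase (P : List (List ℕ)) (r : ℕ) (α : Bool) : List (List ℕ) :=
  if α then
    (if (RowOf P r).dropLast = [] then P.drop r else (RowOf P r).dropLast :: P.drop r)
  else P.drop r

/-- The rows of `P` to be processed by Ψ. -/
def psiUpper (P : List (List ℕ)) (r : ℕ) (α : Bool) : List (List ℕ) :=
  if α then P.take (r - 1) else P.take r

/-- The initial value `m_{r+1}` (for `α = 0`) or `m_r` (for `α = 1`) fed to Ψ. -/
def psiM (P : List (List ℕ)) (r : ℕ) (α : Bool) : ℕ :=
  if α then ((RowOf P r).getLast?).getD 0 else 0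

/-- The state of the reverse insertion Ψ on `(P, (r,·), α)` after processing row `i`:
the working tableau restricted to rows `≥ i` (i.e. `P'_{≥ i}`), the value `m_i`
ejected from row `i`, and the flag `α_i`. -/
def psiStage (P : List (List ℕ)) (r : ℕ) (α : Bool) (i : ℕ) :
    List (List ℕ) × ℕ × Bool :=
  psiRows ((psiUpper P r α).drop (i - 1)) (psiBase P r α) (psiM P r α) α

/-- The reverse insertion Ψ: input a decreasing tableau `P`, the row index `r` of a
removable cell, and `α ∈ {0,1}`; output the new tableau `P'` and the value `m`. -/
def psi (P : List (List ℕ)) (r : ℕ) (α : Bool) : List (List ℕ) × ℕ :=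
  ((psiStage P r α 1).1, (psiStage P r α 1).2.1)

/-- The forward insertion of a value `N` into a tableau (list of rows, processed
top-down). Returns the new tableau, the row and column (1-indexed) of the
terminating cell, and the flag `α`. -/
def phiRows : ℕ → List (List ℕ) → List (List ℕ) × ℕ × ℕ × Bool
  | N, [] => ([[N]], 1, 1, true)                                   -- T1 (new row)
  | N, R :: rest =>
    match (R.filter fun y => decide (y ≤ N)).max? with
    | none => ((R ++ [N]) :: rest, 1, R.length + 1, true)          -- T1 (append)
    | some n1 =>
      let R' := replaceVal R n1 N
      let j := R.idxOf n1
      let n2 := R.getD (j + 1) 0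
      if n1 = N && R.contains (N - 1) then                         -- Dummy
        let o := phiRows (N - 1) rest
        (R' :: o.1, o.2.1 + 1, o.2.2.1, o.2.2.2)
      else if decide (n1 < N) && !(ejectableB rest n1) then        -- Direct Repl.
        let o := phiRows n1 rest
        (R' :: o.1, o.2.1 + 1, o.2.2.1, o.2.2.2)
      else
        match largestEjectableBetween rest n2 n1 with
        | some y =>                                                -- IR1
          let o := phiRows y rest
          (R' :: o.1, o.2.1 + 1, o.2.2.1, o.2.2.2)
        | none =>
          if n2 = 0 then (R' :: rest, 1, j + 1, false)             -- T2
          else                                                     -- IR2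
            let o := phiRows n2 rest
            (R' :: o.1, o.2.1 + 1, o.2.2.1, o.2.2.2)

/-- The forward insertion Φ of `m` into the decreasing tableau `P`. -/
def phi (P : List (List ℕ)) (m : ℕ) : List (List ℕ) × ℕ × ℕ × Bool := phiRows m P

/-- Edelman–Greene reverse row insertion: process rows bottom-to-top, always
replacing `m_i` by `m_{i+1}`. -/
def egRows : List (List ℕ) → List (List ℕ) → ℕ → List (List ℕ) × ℕ
  | [], B, m => (B, m)
  | R :: rest, B, m =>
    let s := egRows rest B m
    let mi := ((R.filter fun y => decide (s.2 < y)).min?).getD 0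
    (replaceVal R mi s.2 :: s.1, mi)

/-- EG reverse row insertion at the removable cell in row `r` of `P`. -/
def egRev (P : List (List ℕ)) (r : ℕ) : List (List ℕ) × ℕ :=
  egRows (P.take (r - 1)) (psiBase P r true) (psiM P r true)

/-- The row reading word: rows from bottom to top, each left to right. -/
def rowWord (T : List (List ℕ)) : List ℕ := T.reverse.flatten

/-- The shape obtained by removing the cell at the end of row `r` (1-indexed). -/
def shapeMinus (sh : List ℕ) (r : ℕ) : List ℕ :=
  (sh.set (r - 1) (sh.getD (r - 1) 0 - 1)).filter fun n => decide (n ≠ 0)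

/-- The shape obtained by adding one cell at the end of row `r` (1-indexed). -/
def shapePlus (sh : List ℕ) (r : ℕ) : List ℕ :=
  if r ≤ sh.length then sh.set (r - 1) (sh.getD (r - 1) 0 + 1) else sh ++ [1]

/-- The bumping path of the removable cell `(r,c)` of `T`: `m r` is the entry at
`(r,c)`, and for `1 ≤ i < r`, `m i` is the smallest entry of row `i` of `T`
exceeding `m (i+1)`. -/
def IsBumpingPath (T : List (List ℕ)) (r c : ℕ) (m : ℕ → ℕ) : Prop :=
  m r = (RowOf T r).getD (c - 1) 0 ∧
  ∀ i, 1 ≤ i → i < r →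
    m i ∈ RowOf T i ∧ m (i + 1) < m i ∧ ∀ y ∈ RowOf T i, m (i + 1) < y → m i ≤ y

/-- A compatible pair of words `(a, i)`: same length, positive letters, `i` weakly
decreasing, and equal consecutive `i`-letters force strictly increasing `a`-letters. -/
def CompatiblePair (a i : List ℕ) : Prop :=
  a.length = i.length ∧ IsPosWord a ∧ IsPosWord i ∧
    (i.zip a).Chain' fun p q => q.1 ≤ p.1 ∧ (p.1 = q.1 → p.2 < q.2)

/-- A set-valued tableau (of partition shape, presented as a list of rows of
finite sets): nonempty sets of positive integers, `max ≤ min` along rows,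
`max < min` down columns. -/
def IsSVT (Q : List (List (Finset ℕ))) : Prop :=
  (∀ R ∈ Q, R ≠ []) ∧
  Q.Chain' (fun R S => S.length ≤ R.length) ∧
  (∀ R ∈ Q, ∀ S ∈ R, S.Nonempty ∧ ∀ x ∈ S, 0 < x) ∧
  (∀ R ∈ Q, R.Chain' fun S S' => ∀ x ∈ S, ∀ y ∈ S', x ≤ y) ∧
  Q.Chain' fun R S => ∀ j < S.length, ∀ x ∈ R.getD j ∅, ∀ y ∈ S.getD j ∅, x < y

/-- Record the value `k` in the recording tableau `Q` at cell `(r,c)`: in a new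
cell if `newCell = true`, otherwise adding `k` to the set already there. -/
def recordCell (Q : List (List (Finset ℕ))) (r c k : ℕ) (newCell : Bool) :
    List (List (Finset ℕ)) :=
  if newCell then
    (if r ≤ Q.length then Q.set (r - 1) (Q.getD (r - 1) [] ++ [{k}]) else Q ++ [[{k}]])
  else
    Q.set (r - 1)
      ((Q.getD (r - 1) []).set (c - 1) (insert k ((Q.getD (r - 1) []).getD (c - 1) ∅)))

/-- The insertion correspondence: insert the letters of `a` successively by Φ,
recording the insertion of `a_k` with the value `i_k`. -/
def tildePhi (a i : List ℕ) : List (List ℕ) × List (List (Finset ℕ)) :=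
  ((a.zip i).reverse).foldl
    (fun PQ x =>
      let o := phi PQ.1 x.1
      (o.1, recordCell PQ.2 o.2.1 o.2.2.1 x.2 o.2.2.2))
    ([], [])

/-- The weight (multiset of entries) of a set-valued tableau. -/
def svtWeight (Q : List (List (Finset ℕ))) : Multiset ℕ :=
  (Q.flatten.map Finset.val).sum


/-!
Each step of Ψ rewrites the reading word locally.  Reading words list rows from the bottom up,
so processing a row `R` appends `R` to the word, and the four cases of a step are instances of
four identities for a strictly decreasing row `R`, each proved with commutations of letters at
distance `≥ 2`, the relation `ii ≡ i` and at most one braid move: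
`R·m ≡ R` if `m ∈ R`, `m - 1 ∉ R`;  `m·R ≡ R` if `m ∈ R`, `m + 1 ∉ R`;
`m·R ≡ R·(m+1)` if `m, m + 1 ∈ R`;  `v·R ≡ R[m ↦ v]·m` if `v < m ∈ R`, `m - 1 ∉ R`.
The first one, iterated along the recursion defining ejectability, shows that an ejectable
value `x` of a tableau `B` satisfies `row(B)·x ≡ row(B)`.  With these, the invariant
`PsiInvariant` is carried from row to row up to the first row.
-/

local infix:50 " ≋ " => HeckeEquiv

namespace HeckeEquiv

instance : Trans HeckeEquiv HeckeEquiv HeckeEquiv := ⟨HeckeEquiv.trans⟩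

theorem append_left (a : List ℕ) {c d : List ℕ} (h : c ≋ d) : a ++ c ≋ a ++ d :=
  append_congr (refl a) h

theorem append_right {a b : List ℕ} (c : List ℕ) (h : a ≋ b) : a ++ c ≋ b ++ c :=
  append_congr h (refl c)

theorem cons_comm_of_far {x : ℕ} {C : List ℕ} (h : ∀ y ∈ C, x + 2 ≤ y ∨ y + 2 ≤ x) :
    x :: C ≋ C ++ [x] := by
  induction C with
  | nil => exact refl [x]
  | cons y C ih =>
    have hxy : [x, y] ++ C ≋ [y, x] ++ C := append_right C (of (.comm x y (h y (by simp))))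
    exact hxy.trans (append_left [y] (ih fun z hz => h z (by simp [hz])))

end HeckeEquiv

open HeckeEquiv

theorem exists_eq_append_cons_of_pairwise {α : Type*} {r : α → α → Prop} {l : List α}
    (hl : l.Pairwise r) {a : α} (ha : a ∈ l) :
    ∃ A C, l = A ++ a :: C ∧ (∀ y ∈ A, r y a) ∧ (∀ y ∈ C, r a y) ∧
      C.Pairwise r := by
  obtain ⟨A, C, rfl⟩ := List.append_of_mem ha
  obtain ⟨-, haC, hAa⟩ := List.pairwise_append.mp hl
  exact ⟨A, C, rfl, fun y hy => hAa y hy a (by simp), (List.pairwise_cons.mp haC).1,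
    (List.pairwise_cons.mp haC).2⟩

theorem exists_eq_append_cons_cons_of_succ_mem {R : List ℕ} (hR : R.Pairwise (· > ·))
    {m : ℕ} (hm : m ∈ R) (hm' : m + 1 ∈ R) :
    ∃ A C, R = A ++ (m + 1) :: m :: C ∧ (∀ y ∈ A, m + 1 < y) ∧ ∀ y ∈ C, y < m := by
  obtain ⟨A, C, rfl, hA, hC, hCp⟩ := exists_eq_append_cons_of_pairwise hR hm'
  have hmC : m ∈ C := by
    rcases List.mem_append.mp hm with h | h
    · exact absurd (hA m h) (by omega)
    · exact (List.mem_cons.mp h).resolve_left (by omega)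
  obtain _ | ⟨z, C⟩ := C
  · simp at hmC
  obtain rfl : z = m := by
    have := hC z (by simp)
    rcases List.mem_cons.mp hmC with h | h
    · exact h.symm
    · have := (List.pairwise_cons.mp hCp).1 m h; omega
  exact ⟨A, C, rfl, hA, (List.pairwise_cons.mp hCp).1⟩

theorem replaceVal_append_cons {A C : List ℕ} {m : ℕ} (hA : m ∉ A) (hC : m ∉ C) (v : ℕ) :
    replaceVal (A ++ m :: C) m v = A ++ v :: C := by
  simp only [replaceVal, List.map_append, List.map_cons]
  rw [List.map_congr_left (fun y hy => if_neg (ne_of_mem_of_not_mem hy hA)),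
    List.map_congr_left (fun y hy => if_neg (ne_of_mem_of_not_mem hy hC))]
  simp

theorem append_singleton_heckeEquiv_of_pred_not_mem {R : List ℕ} (hR : R.Pairwise (· > ·))
    {m : ℕ} (hm : m ∈ R) (hm' : m - 1 ∉ R) : R ++ [m] ≋ R := by
  obtain ⟨A, C, rfl, -, hC, -⟩ := exists_eq_append_cons_of_pairwise hR hm
  have hfar : ∀ y ∈ C, m + 2 ≤ y ∨ y + 2 ≤ m := fun y hy => by
    have : y ≠ m - 1 := fun h => hm' (by simp [← h, hy])
    have := hC y hy; omega
  calc (A ++ m :: C) ++ [m] = (A ++ [m]) ++ (C ++ [m]) := by simp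
    _ ≋ (A ++ [m]) ++ (m :: C) := append_left _ (cons_comm_of_far hfar).symm
    _ = A ++ ([m, m] ++ C) := by simp
    _ ≋ A ++ ([m] ++ C) := append_left _ (append_right _ (of (.idem m)))
    _ = A ++ m :: C := rfl

theorem cons_heckeEquiv_of_succ_not_mem {R : List ℕ} (hR : R.Pairwise (· > ·))
    {m : ℕ} (hm : m ∈ R) (hm' : m + 1 ∉ R) : m :: R ≋ R := by
  obtain ⟨A, C, rfl, hA, -, -⟩ := exists_eq_append_cons_of_pairwise hR hm
  have hfar : ∀ y ∈ A, m + 2 ≤ y ∨ y + 2 ≤ m := fun y hy => by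
    have : y ≠ m + 1 := fun h => hm' (by simp [← h, hy])
    have := hA y hy; omega
  calc m :: (A ++ m :: C) = (m :: A) ++ (m :: C) := rfl
    _ ≋ (A ++ [m]) ++ (m :: C) := append_right _ (cons_comm_of_far hfar)
    _ = A ++ ([m, m] ++ C) := by simp
    _ ≋ A ++ ([m] ++ C) := append_left _ (append_right _ (of (.idem m)))
    _ = A ++ m :: C := rfl

theorem cons_heckeEquiv_append_succ {R : List ℕ} (hR : R.Pairwise (· > ·))
    {m : ℕ} (hm : m ∈ R) (hm' : m + 1 ∈ R) : m :: R ≋ R ++ [m + 1] := by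
  obtain ⟨A, C, rfl, hA, hC⟩ := exists_eq_append_cons_cons_of_succ_mem hR hm hm'
  have hfarA : ∀ y ∈ A, m + 2 ≤ y ∨ y + 2 ≤ m := fun y hy => by have := hA y hy; omega
  have hfarC : ∀ y ∈ C, m + 1 + 2 ≤ y ∨ y + 2 ≤ m + 1 := fun y hy => by
    have := hC y hy; omega
  calc m :: (A ++ (m + 1) :: m :: C) = (m :: A) ++ ((m + 1) :: m :: C) := rfl
    _ ≋ (A ++ [m]) ++ ((m + 1) :: m :: C) := append_right _ (cons_comm_of_far hfarA)
    _ = A ++ ([m, m + 1, m] ++ C) := by simp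
    _ ≋ A ++ ([m + 1, m, m + 1] ++ C) := append_left _ (append_right _ (of (.braid m)))
    _ = (A ++ [m + 1, m]) ++ ((m + 1) :: C) := by simp
    _ ≋ (A ++ [m + 1, m]) ++ (C ++ [m + 1]) := append_left _ (cons_comm_of_far hfarC)
    _ = (A ++ (m + 1) :: m :: C) ++ [m + 1] := by simp

theorem cons_heckeEquiv_replaceVal_append {R : List ℕ} (hR : R.Pairwise (· > ·))
    {m : ℕ} (hm : m ∈ R) (hm' : m - 1 ∉ R) {v : ℕ} (hv : v < m) :
    v :: R ≋ replaceVal R m v ++ [m] := by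
  obtain ⟨A, C, rfl, hA, hC, -⟩ := exists_eq_append_cons_of_pairwise hR hm
  have hfarA : ∀ y ∈ A, v + 2 ≤ y ∨ y + 2 ≤ v := fun y hy => by have := hA y hy; omega
  have hfarC : ∀ y ∈ C, m + 2 ≤ y ∨ y + 2 ≤ m := fun y hy => by
    have : y ≠ m - 1 := fun h => hm' (by simp [← h, hy])
    have := hC y hy; omega
  rw [replaceVal_append_cons (fun h => lt_irrefl m (hA m h)) (fun h => lt_irrefl m (hC m h))]
  calc v :: (A ++ m :: C) = (v :: A) ++ (m :: C) := rfl
    _ ≋ (A ++ [v]) ++ (m :: C) := append_right _ (cons_comm_of_far hfarA)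
    _ ≋ (A ++ [v]) ++ (C ++ [m]) := append_left _ (cons_comm_of_far hfarC)
    _ = (A ++ v :: C) ++ [m] := by simp

def IsDecreasingRow (R : List ℕ) : Prop := R.Pairwise (· > ·) ∧ ∀ x ∈ R, 0 < x

theorem IsDecreasingTableau.isDecreasingRow {P : List (List ℕ)} (hP : IsDecreasingTableau P)
    {R : List ℕ} (hR : R ∈ P) : IsDecreasingRow R :=
  ⟨List.isChain_iff_pairwise.mp (hP.2.2.1 R hR), hP.2.1 R hR⟩

theorem IsDecreasingRow.replaceVal {R : List ℕ} (hR : IsDecreasingRow R) {m v : ℕ}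
    (hm : m ∈ R) (hv0 : 0 < v) (hvm : v < m) (hbelow : ∀ y ∈ R, y < m → y < v) :
    IsDecreasingRow (replaceVal R m v) := by
  obtain ⟨A, C, rfl, hA, hC, hCp⟩ := exists_eq_append_cons_of_pairwise hR.1 hm
  rw [replaceVal_append_cons (fun h => lt_irrefl m (hA m h)) (fun h => lt_irrefl m (hC m h))]
  have hpos := hR.2
  simp only [List.mem_append, List.mem_cons] at hbelow hpos
  refine ⟨List.pairwise_append.mpr ⟨(List.pairwise_append.mp hR.1).1, ?_, ?_⟩, ?_⟩
  · exact List.pairwise_cons.mpr ⟨fun y hy => hbelow y (.inr (.inr hy)) (hC y hy), hCp⟩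
  · simp only [List.mem_cons, forall_eq_or_imp]
    exact fun y hy => ⟨hvm.trans (hA y hy), fun z hz => (hC z hz).trans (hA y hy)⟩
  · simp only [List.mem_append, List.mem_cons]
    rintro x (hx | rfl | hx)
    exacts [hpos x (.inl hx), hv0, hpos x (.inr (.inr hx))]

theorem rowWord_cons (R : List ℕ) (B : List (List ℕ)) : rowWord (R :: B) = rowWord B ++ R := by
  simp [rowWord]

theorem rowWord_append (X Y : List (List ℕ)) : rowWord (X ++ Y) = rowWord Y ++ rowWord X := by
  simp [rowWord]

theorem rowWord_append_singleton_heckeEquiv_of_ejectableB {B : List (List ℕ)}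
    (hB : ∀ S ∈ B, IsDecreasingRow S) {x : ℕ} (hx : ejectableB B x = true) :
    rowWord B ++ [x] ≋ rowWord B := by
  induction B generalizing x with
  | nil => simp [ejectableB] at hx
  | cons R B ih =>
    have hR := hB R (by simp)
    simp only [ejectableB, Bool.and_eq_true, Bool.or_eq_true, Bool.not_eq_true',
      List.contains_iff_mem, ← Bool.not_eq_true] at hx
    obtain ⟨hxR, hx'⟩ := hx
    rw [rowWord_cons, List.append_assoc]
    by_cases hpred : x - 1 ∈ R
    · have hsucc : x - 1 + 1 = x := Nat.sub_add_cancel (hR.2 x hxR)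
      have hbraid := cons_heckeEquiv_append_succ hR.1 hpred (by rwa [hsucc])
      rw [hsucc] at hbraid
      calc rowWord B ++ (R ++ [x]) ≋ rowWord B ++ ((x - 1) :: R) := append_left _ hbraid.symm
        _ = (rowWord B ++ [x - 1]) ++ R := by simp
        _ ≋ rowWord B ++ R := append_right _ (ih (fun S hS => hB S (by simp [hS]))
            (hx'.resolve_left (not_not_intro hpred)))
    · exact append_left _ (append_singleton_heckeEquiv_of_pred_not_mem hR.1 hxR hpred)

def minAbove (R : List ℕ) (m : ℕ) : ℕ := ((R.filter fun y => decide (m < y)).min?).getD 0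

theorem minAbove_spec {R : List ℕ} {m : ℕ} (h : ∃ y ∈ R, m < y) :
    minAbove R m ∈ R ∧ m < minAbove R m ∧ ∀ y ∈ R, y < minAbove R m → y ≤ m := by
  obtain ⟨y, hy, hmy⟩ := h
  obtain ⟨mi, hmi⟩ := Option.isSome_iff_exists.mp
    (List.isSome_min?_of_mem (l := R.filter fun y => decide (m < y)) (a := y) (by simp [hy, hmy]))
  obtain ⟨hmiF, hmin⟩ := List.min?_eq_some_iff.mp hmi
  simp only [List.mem_filter, decide_eq_true_eq] at hmiF hmin
  simp only [minAbove, hmi, Option.getD_some]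
  exact ⟨hmiF.1, hmiF.2,
    fun z hz hzmi => not_lt.mp fun hmz => (hmin z ⟨hz, hmz⟩).not_gt hzmi⟩

theorem smallestEjectableBetween_spec {B : List (List ℕ)} {lo hi x : ℕ}
    (h : smallestEjectableBetween B lo hi = some x) :
    ejectableB B x = true ∧ lo < x ∧ x < hi := by
  have := (List.mem_filter.mp (List.min?_eq_some_iff.mp h).1).2
  simp only [Bool.and_eq_true, decide_eq_true_eq] at this
  exact ⟨this.1.1, this.1.2, this.2⟩

/-- The state of Ψ after a row has been processed: `W` is the reading word of the original rows
processed so far and of all rows below them, `B` the rows output so far and `m` the value just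
bumped.  With flag `true` the value `m` has left the tableau; with flag `false` it is still
absorbed by `row(B)`. -/
def PsiInvariant (W : List ℕ) (B : List (List ℕ)) (m : ℕ) : Bool → Prop
  | true => 0 < m ∧ W ≋ rowWord B ++ [m]
  | false => W ≋ rowWord B ∧ (0 < m → rowWord B ++ [m] ≋ rowWord B)

namespace PsiInvariant

variable {W : List ℕ} {B : List (List ℕ)} {m : ℕ} {a : Bool}

theorem heckeEquiv_append_singleton (h : PsiInvariant W B m a) (hm : 0 < m) :
    W ≋ rowWord B ++ [m] := by
  cases a
  exacts [h.1.trans (h.2 hm).symm, h.2]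

theorem append_heckeEquiv {R : List ℕ} (h : PsiInvariant W B m a) (hR : R.Pairwise (· > ·))
    (habsorb : a = true → m ∈ R ∧ m + 1 ∉ R) : W ++ R ≋ rowWord B ++ R := by
  cases a
  · exact append_right R h.1
  · obtain ⟨hm, hm'⟩ := habsorb rfl
    calc W ++ R ≋ (rowWord B ++ [m]) ++ R := append_right R h.2
      _ = rowWord B ++ m :: R := by simp
      _ ≋ rowWord B ++ R := append_left _ (cons_heckeEquiv_of_succ_not_mem hR hm hm')

theorem cons_of_succ_mem {R : List ℕ} (h : PsiInvariant W B m a) (hR : R.Pairwise (· > ·))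
    (hm : m ∈ R) (hm' : m + 1 ∈ R) (hm0 : 0 < m) :
    PsiInvariant (W ++ R) (R :: B) (m + 1) a := by
  have hbraid := cons_heckeEquiv_append_succ hR hm hm'
  cases a
  · refine ⟨by rw [rowWord_cons]; exact append_right R h.1, fun _ => ?_⟩
    calc rowWord (R :: B) ++ [m + 1] = rowWord B ++ (R ++ [m + 1]) := by simp [rowWord_cons]
      _ ≋ rowWord B ++ m :: R := append_left _ hbraid.symm
      _ = (rowWord B ++ [m]) ++ R := by simp
      _ ≋ rowWord B ++ R := append_right _ (h.2 hm0)
      _ = rowWord (R :: B) := (rowWord_cons R B).symm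
  · refine ⟨by omega, ?_⟩
    calc W ++ R ≋ (rowWord B ++ [m]) ++ R := append_right R h.2
      _ = rowWord B ++ m :: R := by simp
      _ ≋ rowWord B ++ (R ++ [m + 1]) := append_left _ hbraid
      _ = rowWord (R :: B) ++ [m + 1] := by simp [rowWord_cons]

end PsiInvariant

theorem psiInvariant_replaceVal_cons {W R : List ℕ} {B : List (List ℕ)} {mi v : ℕ}
    (hR : R.Pairwise (· > ·)) (hmi : mi ∈ R) (hmi' : mi - 1 ∉ R) (hv : v < mi)
    (hW : W ++ R ≋ rowWord B ++ v :: R) :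
    PsiInvariant (W ++ R) (replaceVal R mi v :: B) mi true :=
  ⟨by omega, calc W ++ R ≋ rowWord B ++ v :: R := hW
    _ ≋ rowWord B ++ (replaceVal R mi v ++ [mi]) :=
      append_left _ (cons_heckeEquiv_replaceVal_append hR hmi hmi' hv)
    _ = rowWord (replaceVal R mi v :: B) ++ [mi] := by simp [rowWord_cons]⟩

theorem psiInvariant_cons_of_heckeEquiv {W R : List ℕ} {B : List (List ℕ)} {mi : ℕ}
    (hR : R.Pairwise (· > ·)) (hmi : mi ∈ R) (hmi' : mi - 1 ∉ R)
    (hW : W ++ R ≋ rowWord B ++ R) : PsiInvariant (W ++ R) (R :: B) mi false := by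
  refine ⟨by rwa [rowWord_cons], fun _ => ?_⟩
  rw [rowWord_cons, List.append_assoc]
  exact append_left _ (append_singleton_heckeEquiv_of_pred_not_mem hR hmi hmi')

theorem psiRowStep_eq (R : List ℕ) (B : List (List ℕ)) (m : ℕ) (a : Bool) :
    psiRowStep R B m a =
      if R.contains (minAbove R m - 1) then (R, minAbove R m, a)
      else if a && !R.contains m then (replaceVal R (minAbove R m) m, minAbove R m, true)
      else match smallestEjectableBetween B m (minAbove R m) with
        | some x => (replaceVal R (minAbove R m) x, minAbove R m, true)
        | none => (R, minAbove R m, false) :=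
  rfl

theorem psiRowStep_spec {W R : List ℕ} {B : List (List ℕ)} {m : ℕ} {a : Bool}
    (hR : IsDecreasingRow R) (hB : ∀ S ∈ B, IsDecreasingRow S) (hm : ∃ y ∈ R, m < y)
    (h : PsiInvariant W B m a) :
    let s := psiRowStep R B m a
    IsDecreasingRow s.1 ∧ s.2.1 = minAbove R m ∧
      PsiInvariant (W ++ R) (s.1 :: B) s.2.1 s.2.2 := by
  obtain ⟨hmiR, hmmi, hbelow⟩ := minAbove_spec hm
  rw [psiRowStep_eq]
  set mi := minAbove R m
  split_ifs with hdummy hdirect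
  · -- no entry of `R` lies strictly between `m` and `mi`, so `mi - 1 ∈ R` forces `mi = m + 1`
    have hmi : mi = m + 1 := by
      have := hbelow _ (List.contains_iff_mem.mp hdummy) (by omega); omega
    rw [hmi] at hdummy ⊢
    have hm_mem : m ∈ R := by simpa using hdummy
    exact ⟨hR, rfl, h.cons_of_succ_mem hR.1 hm_mem (hmi ▸ hmiR) (hR.2 m hm_mem)⟩
  all_goals have hpred : mi - 1 ∉ R := fun h' => hdummy (List.contains_iff_mem.mpr h')
  · obtain ⟨rfl, hmR⟩ : a = true ∧ m ∉ R := by simpa using hdirect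
    refine ⟨hR.replaceVal hmiR h.1 hmmi fun y hy hy' => (hbelow y hy hy').lt_of_ne ?_, rfl, ?_⟩
    · rintro rfl; exact hmR hy
    · exact psiInvariant_replaceVal_cons hR.1 hmiR hpred hmmi
        (calc W ++ R ≋ (rowWord B ++ [m]) ++ R := append_right R h.2
          _ = rowWord B ++ m :: R := by simp)
  have habsorb : a = true → m ∈ R ∧ m + 1 ∉ R := fun ha => by
    have hmR : m ∈ R := by simpa [ha] using hdirect
    refine ⟨hmR, fun hm1 => hpred ?_⟩
    rwa [show mi - 1 = m by have := hbelow _ hm1; omega]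
  have hW := h.append_heckeEquiv hR.1 habsorb
  split
  next x hx =>
    obtain ⟨hxB, hmx, hxmi⟩ := smallestEjectableBetween_spec hx
    refine ⟨hR.replaceVal hmiR (by omega) hxmi fun y hy hy' => (hbelow y hy hy').trans_lt hmx,
      rfl, psiInvariant_replaceVal_cons hR.1 hmiR hpred hxmi ?_⟩
    calc W ++ R ≋ rowWord B ++ R := hW
      _ ≋ (rowWord B ++ [x]) ++ R :=
        append_right R (rowWord_append_singleton_heckeEquiv_of_ejectableB hB hxB).symm
      _ = rowWord B ++ x :: R := by simp
  next => exact ⟨hR, rfl, psiInvariant_cons_of_heckeEquiv hR.1 hmiR hpred hW⟩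

def ColumnStrict (R S : List ℕ) : Prop :=
  S.length ≤ R.length ∧ ∀ j < S.length, S.getD j 0 < R.getD j 0

theorem ColumnStrict.exists_lt {R S : List ℕ} (h : ColumnStrict R S) {y : ℕ} (hy : y ∈ S) :
    ∃ z ∈ R, y < z := by
  obtain ⟨j, hj, rfl⟩ := List.getElem_of_mem hy
  have hjR := hj.trans_le h.1
  refine ⟨R[j], List.getElem_mem hjR, ?_⟩
  simpa only [List.getD_eq_getElem _ _ hj, List.getD_eq_getElem _ _ hjR] using h.2 j hj

theorem psiRows_spec {W : List ℕ} {L B : List (List ℕ)} {m : ℕ} {a : Bool}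
    (hL : ∀ R ∈ L, IsDecreasingRow R)
    (hchain : L.IsChain ColumnStrict)
    (hB : ∀ S ∈ B, IsDecreasingRow S) (hstart : ∀ R ∈ L.getLast?, ∃ y ∈ R, m < y)
    (h : PsiInvariant W B m a) :
    let s := psiRows L B m a
    (∀ S ∈ s.1, IsDecreasingRow S) ∧ PsiInvariant (W ++ rowWord L) s.1 s.2.1 s.2.2 ∧
      m ≤ s.2.1 ∧ ∀ R ∈ L.head?, s.2.1 ∈ R := by
  induction L with
  | nil => exact ⟨hB, by simpa [rowWord, psiRows] using h, le_rfl, by simp⟩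
  | cons R rest ih =>
    obtain ⟨hB', h', hm', hhead⟩ := ih (fun S hS => hL S (by simp [hS])) hchain.tail
      (fun S hS => hstart S (by simp_all [List.getLast?_cons]))
    have hnext : ∃ y ∈ R, (psiRows rest B m a).2.1 < y := by
      obtain _ | ⟨S, rest⟩ := rest
      · exact hstart R rfl
      · exact (List.isChain_cons_cons.mp hchain).1.exists_lt (hhead S rfl)
    obtain ⟨hrow, hmi, hinv⟩ := psiRowStep_spec (hL R (by simp)) hB' hnext h'
    obtain ⟨hmiR, hmmi, -⟩ := minAbove_spec hnext
    simp only [psiRows, List.mem_cons, List.head?_cons, Option.mem_def, Option.some.injEq,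
      forall_eq', rowWord_cons, ← List.append_assoc, hmi]
    exact ⟨fun S hS => hS.elim (· ▸ hrow) (hB' S), hmi ▸ hinv, hm'.trans hmmi.le, hmiR⟩

theorem psi_eq_psiRows (P : List (List ℕ)) (r : ℕ) (α : Bool) :
    psi P r α = ((psiRows (psiUpper P r α) (psiBase P r α) (psiM P r α) α).1,
      (psiRows (psiUpper P r α) (psiBase P r α) (psiM P r α) α).2.1) := by
  simp [psi, psiStage]

theorem heckeEquiv_psi_false {P : List (List ℕ)} (hP : IsDecreasingTableau P) {r : ℕ}
    (hr : 1 ≤ r) (hrP : r ≤ P.length) :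
    rowWord P ≋ rowWord (psi P r false).1 ++ [(psi P r false).2] := by
  have hrows : ∀ R ∈ P.take r, IsDecreasingRow R :=
    fun R hR => hP.isDecreasingRow (List.mem_of_mem_take hR)
  have hstart : ∀ R ∈ (P.take r).getLast?, ∃ y ∈ R, 0 < y := fun R hR => by
    obtain ⟨y, hy⟩ := List.exists_mem_of_ne_nil R
      (hP.1 R (List.mem_of_mem_take (List.mem_of_getLast? hR)))
    exact ⟨y, hy, (hrows R (List.mem_of_getLast? hR)).2 y hy⟩
  obtain ⟨-, hinv, -, hhead⟩ := psiRows_spec (W := rowWord (P.drop r)) (a := false) hrows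
    (hP.2.2.2.take r) (fun R hR => hP.isDecreasingRow (List.mem_of_mem_drop hR)) hstart
    ⟨.refl _, fun h => absurd h (lt_irrefl 0)⟩
  obtain ⟨R, hR⟩ : ∃ R, (P.take r).head? = some R :=
    Option.isSome_iff_exists.mp (by
      rw [List.head?_take, if_neg (by omega), List.isSome_head?]
      exact List.ne_nil_of_length_pos (by omega))
  have hpos : 0 < (psiRows (P.take r) (P.drop r) 0 false).2.1 :=
    (hrows R (List.mem_of_head? hR)).2 _ (hhead R hR)
  have hword : rowWord P = rowWord (P.drop r) ++ rowWord (P.take r) := by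
    rw [← rowWord_append, List.take_append_drop]
  rw [hword, psi_eq_psiRows]
  exact hinv.heckeEquiv_append_singleton hpos

theorem psiM_true_mem {P : List (List ℕ)} {r : ℕ} (h : RowOf P r ≠ []) :
    psiM P r true ∈ RowOf P r := by
  simp [psiM, List.getLast?_eq_some_getLast h]

theorem rowWord_psiBase_true_append_psiM {P : List (List ℕ)} {r : ℕ} (h : RowOf P r ≠ []) :
    rowWord (psiBase P r true) ++ [psiM P r true] = rowWord (P.drop r) ++ RowOf P r := by
  have hrow := List.dropLast_append_getLast h
  simp only [psiBase, psiM, if_true, List.getLast?_eq_some_getLast h, Option.getD_some]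
  split_ifs with hnil
  · rw [hnil, List.nil_append] at hrow; rw [hrow]
  · rw [rowWord_cons, List.append_assoc, hrow]

theorem IsDecreasingTableau.isDecreasingRow_of_mem_psiBase {P : List (List ℕ)}
    (hP : IsDecreasingTableau P) {r : ℕ} (hr : 1 ≤ r) (hrP : r ≤ P.length) :
    ∀ S ∈ psiBase P r true, IsDecreasingRow S := by
  have hrow : IsDecreasingRow (RowOf P r) := by
    rw [RowOf, List.getD_eq_getElem _ _ (by omega)]
    exact hP.isDecreasingRow (List.getElem_mem _)
  have hdropLast : IsDecreasingRow (RowOf P r).dropLast :=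
    ⟨hrow.1.sublist (List.dropLast_sublist _),
      fun x hx => hrow.2 x ((List.dropLast_sublist _).subset hx)⟩
  have hdrop : ∀ S ∈ P.drop r, IsDecreasingRow S :=
    fun S hS => hP.isDecreasingRow (List.mem_of_mem_drop hS)
  simp only [psiBase, if_true]
  split_ifs
  · exact hdrop
  · exact fun S hS => (List.mem_cons.mp hS).elim (· ▸ hdropLast) (hdrop S)

theorem heckeEquiv_psi_true {P : List (List ℕ)} (hP : IsDecreasingTableau P) {r : ℕ}
    (hr : 1 ≤ r) (hrP : r ≤ P.length) :
    rowWord P ≋ rowWord (psi P r true).1 ++ [(psi P r true).2] := by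
  have hrow : RowOf P r = P[r - 1] := List.getD_eq_getElem _ _ (by omega)
  have hsplit : P = P.take (r - 1) ++ RowOf P r :: P.drop r := by
    have hdrop := List.drop_eq_getElem_cons (l := P) (i := r - 1) (by omega)
    rw [Nat.sub_add_cancel hr] at hdrop
    rw [hrow, ← hdrop, List.take_append_drop]
  have hmem : RowOf P r ∈ P := hrow ▸ List.getElem_mem _
  have hne : RowOf P r ≠ [] := hP.1 _ hmem
  have hchain := hP.2.2.2
  rw [hsplit] at hchain
  obtain ⟨htop, -, hlink⟩ := List.isChain_append.mp hchain
  have hstart : ∀ S ∈ (P.take (r - 1)).getLast?, ∃ y ∈ S, psiM P r true < y :=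
    fun S hS => ColumnStrict.exists_lt (hlink S hS _ rfl) (psiM_true_mem hne)
  have hm0 : 0 < psiM P r true := (hP.isDecreasingRow hmem).2 _ (psiM_true_mem hne)
  obtain ⟨-, hinv, hle, -⟩ := psiRows_spec (W := rowWord (P.drop r) ++ RowOf P r) (a := true)
    (fun S hS => hP.isDecreasingRow (List.mem_of_mem_take hS)) htop
    (hP.isDecreasingRow_of_mem_psiBase hr hrP) hstart
    ⟨hm0, rowWord_psiBase_true_append_psiM hne ▸ .refl _⟩
  have hword : rowWord P = (rowWord (P.drop r) ++ RowOf P r) ++ rowWord (P.take (r - 1)) := by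
    conv_lhs => rw [hsplit]
    rw [rowWord_append, rowWord_cons]
  rw [hword, psi_eq_psiRows]
  exact hinv.heckeEquiv_append_singleton (hm0.trans_le hle)

/-- Ψ respects Hecke equivalence: if `Ψ(P,(r,c),α) = (P',m)` then
`row(P) ≡_H row(P')·m`. -/
theorem statement7 (P : List (List ℕ)) (r c : ℕ) (α : Bool)
    (hP : IsDecreasingTableau P) (hrc : IsRemovable P r c) :
    HeckeEquiv (rowWord P) (rowWord (psi P r α).1 ++ [(psi P r α).2]) := by
  obtain ⟨hr, hrP, -⟩ := hrc
  cases α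
  · exact heckeEquiv_psi_false hP hr hrP
  · exact heckeEquiv_psi_true hP hr hrP
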